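/- For formal power series A, B without constant term, the coalgebra endomorphisms φ_A of T(V) defined by φ_A(x_1...x_n) = Σ_{k=1}^n Σ_{i_1+...+i_k=n} a_{i_1}...a_{i_k} F_{(1^{i_1}...k^{i_k})}(x_1...x_n) satisfy φ_X = Id and φ_A ∘ φ_B = φ_{A∘B} (composition of formal series). -/

import Mathlib

open Finsupp TensorProduct

noncomputable section

variable (k : Type) [Field k] (V : Type)

/-- The free `k`-module on the set of words with letters in `V`
(a model of the tensor module `T(V)`; pure tensors of elements of `V`
correspond to the basis vectors indexed by lists). -/
abbrev TW := List V →₀ k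

variable {k V} in
/-- The basis vector of a word. -/
def sg (w : List V) : TW k V := Finsupp.single w 1

/-- Linear extension of a word-indexed family. -/
def ext1 (f : List V → TW k V) : TW k V →ₗ[k] TW k V :=
  Finsupp.lsum k fun w => LinearMap.toSpanSingleton k _ (f w)

/-- Bilinear extension of a map defined on pairs of words. -/
def ext2 (f : List V → List V → TW k V) : TW k V →ₗ[k] TW k V →ₗ[k] TW k V :=
  Finsupp.lsum k fun v => LinearMap.toSpanSingleton k _
    (Finsupp.lsum k fun w => LinearMap.toSpanSingleton k (TW k V) (f v w))

variable (mul : V → V → V)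

/-- Hoffman's quasi-shuffle product `⧢` on words:
`1 ⧢ w = w = w ⧢ 1` and `av ⧢ bw = a(v ⧢ bw) + b(av ⧢ w) + (a·b)(v ⧢ w)`. -/
def qshW : List V → List V → TW k V
  | [], w => sg w
  | a::v, [] => sg (a::v)
  | a::v, b::w =>
      (qshW v (b::w)).mapDomain (List.cons a) +
      (qshW (a::v) w).mapDomain (List.cons b) +
      (qshW v w).mapDomain (List.cons (mul a b))
  termination_by v w => v.length + w.length

/-- Hoffman's half-product `av ≺ bw = a(v ⧢ bw)`, with `x ≺ 1 = x`, `1 ≺ x = 0`. -/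
def precW : List V → List V → TW k V
  | [], _ => 0
  | a::v, w => (qshW k V mul v w).mapDomain (List.cons a)

/-- Hoffman's half-product `av ≻ bw = b(av ⧢ w)`, with `1 ≻ x = x`, `x ≻ 1 = 0`. -/
def succW : List V → List V → TW k V
  | _, [] => 0
  | v, b::w => (qshW k V mul v w).mapDomain (List.cons b)

/-- Hoffman's product `av • bw = (a·b)(v ⧢ w)`. -/
def bulW : List V → List V → TW k V
  | [], _ => 0
  | _::_, [] => 0
  | a::v, b::w => (qshW k V mul v w).mapDomain (List.cons (mul a b))

def qshL : TW k V →ₗ[k] TW k V →ₗ[k] TW k V := ext2 k V (qshW k V mul)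
def precL : TW k V →ₗ[k] TW k V →ₗ[k] TW k V := ext2 k V (precW k V mul)
def succL : TW k V →ₗ[k] TW k V →ₗ[k] TW k V := ext2 k V (succW k V mul)
def bulL : TW k V →ₗ[k] TW k V →ₗ[k] TW k V := ext2 k V (bulW k V mul)

/-- Deconcatenation coproduct on a word. -/
def delW (w : List V) : TW k V ⊗[k] TW k V :=
  ∑ i ∈ Finset.range (w.length + 1), sg (w.take i) ⊗ₜ[k] sg (w.drop i)

/-- The deconcatenation coproduct, linearly extended. -/
def delL : TW k V →ₗ[k] TW k V ⊗[k] TW k V :=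
  Finsupp.lsum k fun w => LinearMap.toSpanSingleton k _ (delW k V w)

/-- Reduced deconcatenation coproduct on a word. -/
def rdelW (w : List V) : TW k V ⊗[k] TW k V :=
  ∑ i ∈ Finset.Ioo 0 w.length, sg (w.take i) ⊗ₜ[k] sg (w.drop i)

/-- The reduced deconcatenation coproduct, linearly extended. -/
def rdelL : TW k V →ₗ[k] TW k V ⊗[k] TW k V :=
  Finsupp.lsum k fun w => LinearMap.toSpanSingleton k _ (rdelW k V w)

/-- The augmentation ideal `T⁺(V)`: the span of the nonempty words. -/
def Tplus : Submodule k (TW k V) :=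
  Submodule.span k {x | ∃ w : List V, w ≠ [] ∧ x = sg w}

variable [NonUnitalCommRing V] [Module k V]

/-- Product of a list of elements of `V`. -/
def prodList : List V → V
  | [] => 0
  | a :: t => t.foldl (· * ·) a

/-- For a formal series `A = Σ_{n≥1} a_n Xⁿ` (given by its coefficients `a`), the
coalgebra endomorphism `φ_A` of `T(V)`:
`φ_A(x₁…x_n) = Σ_k Σ_{i₁+⋯+i_k=n} a_{i₁}⋯a_{i_k} F_{(1^{i₁}…k^{i_k})}(x₁…x_n)`. -/
def phiA (a : ℕ → k) : TW k V →ₗ[k] TW k V :=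
  ext1 k V fun x =>
    ∑ c : Composition x.length,
      ((c.blocks.map a).prod) • sg ((x.splitWrtComposition c).map (prodList V))

/-- Composition of formal power series without constant term, on coefficients:
`(A∘B)_n = Σ_{k} a_k Σ_{i₁+⋯+i_k=n} b_{i₁}⋯b_{i_k}`. -/
def compSeries (a b : ℕ → k) : ℕ → k :=
  fun n => if n = 0 then 0 else ∑ c : Composition n, a c.length * (c.blocks.map b).prod

/-! ### Auxiliary development -/

section Aux

open List

/-! #### Combinatorics of compositions via block lists -/

lemma comp_blocks_inj {n : ℕ} : Function.Injective (Composition.blocks (n := n)) := by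
  rintro ⟨b, h1, h2⟩ ⟨b', h1', h2'⟩ h
  simpa using h

/-- Blocks of compositions of `n`, as a finset of lists. -/
def csF (n : ℕ) : Finset (List ℕ) :=
  (Finset.univ : Finset (Composition n)).image Composition.blocks

lemma mem_csF {n : ℕ} {l : List ℕ} :
    l ∈ csF n ↔ (∀ i ∈ l, 0 < i) ∧ l.sum = n := by
  constructor
  · intro h
    simp only [csF, Finset.mem_image] at h
    obtain ⟨c, -, rfl⟩ := h
    exact ⟨fun i hi => c.blocks_pos hi, c.blocks_sum⟩
  · rintro ⟨h1, h2⟩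
    simp only [csF, Finset.mem_image]
    exact ⟨⟨l, fun {i} => h1 i, h2⟩, Finset.mem_univ _, rfl⟩

variable {M : Type*} [AddCommMonoid M]

lemma sum_comp_eq (n : ℕ) (F : List ℕ → M) :
    ∑ c : Composition n, F c.blocks = ∑ l ∈ csF n, F l :=
  (Finset.sum_image fun c _ d _ h => comp_blocks_inj h).symm

lemma pos_sum_of_pos {l : List ℕ} (h1 : ∀ i ∈ l, 0 < i) (hl : l ≠ []) : 0 < l.sum := by
  cases l with
  | nil => exact absurd rfl hl
  | cons a t =>
    have := h1 a (by simp)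
    simp only [List.sum_cons]
    omega

lemma ne_nil_of_mem_csF {n : ℕ} (hn : 0 < n) {l : List ℕ} (hl : l ∈ csF n) : l ≠ [] := by
  rintro rfl
  rw [mem_csF] at hl
  simp at hl
  omega

lemma sum_csF_succ {n : ℕ} (hn : 0 < n) (F : List ℕ → M) :
    ∑ l ∈ csF n, F l = ∑ j ∈ Finset.Icc 1 n, ∑ r ∈ csF (n - j), F (j :: r) := by
  have hsig : (∑ p ∈ (Finset.Icc 1 n).sigma (fun j => csF (n - j)), F (p.1 :: p.2))
      = ∑ j ∈ Finset.Icc 1 n, ∑ r ∈ csF (n - j), F (j :: r) := Finset.sum_sigma _ _ _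
  rw [← hsig]
  refine Finset.sum_nbij' (fun l => (⟨l.headI, l.tail⟩ : (_ : ℕ) × List ℕ))
    (fun p => p.1 :: p.2) ?_ ?_ ?_ ?_ ?_
  · intro l hl
    obtain ⟨a, t, rfl⟩ := List.exists_cons_of_ne_nil (ne_nil_of_mem_csF hn hl)
    rw [mem_csF] at hl
    obtain ⟨hpos, hsum⟩ := hl
    simp only [List.sum_cons] at hsum
    have ha : 0 < a := hpos a (by simp)
    simp only [List.headI, List.tail_cons, Finset.mem_sigma, Finset.mem_Icc, mem_csF]
    refine ⟨⟨ha, by omega⟩, fun i hi => hpos i (by simp [hi]), by omega⟩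
  · rintro ⟨j, r⟩ hp
    simp only [Finset.mem_sigma, Finset.mem_Icc, mem_csF] at hp
    rw [mem_csF]
    constructor
    · rintro i hi
      rcases List.mem_cons.1 hi with rfl | hi
      · omega
      · exact hp.2.1 i hi
    · simp only [List.sum_cons]
      omega
  · intro l hl
    obtain ⟨a, t, rfl⟩ := List.exists_cons_of_ne_nil (ne_nil_of_mem_csF hn hl)
    rfl
  · rintro ⟨j, r⟩ _
    rfl
  · intro l hl
    obtain ⟨a, t, rfl⟩ := List.exists_cons_of_ne_nil (ne_nil_of_mem_csF hn hl)
    rfl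

lemma sum_csF_split {n : ℕ} (F : List ℕ → List ℕ → M) :
    ∑ l ∈ csF n, ∑ m ∈ Finset.Icc 1 l.length, F (l.take m) (l.drop m)
      = ∑ j ∈ Finset.Icc 1 n, ∑ f ∈ csF j, ∑ g ∈ csF (n - j), F f g := by
  have h2 : (∑ p ∈ (Finset.Icc 1 n).sigma (fun j => csF j ×ˢ csF (n - j)), F p.2.1 p.2.2)
      = ∑ j ∈ Finset.Icc 1 n, ∑ f ∈ csF j, ∑ g ∈ csF (n - j), F f g := by
    rw [Finset.sum_sigma]
    exact Finset.sum_congr rfl fun j _ => Finset.sum_product _ _ _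
  have h1 : (∑ p ∈ (csF n).sigma (fun l => Finset.Icc 1 l.length),
      F (p.1.take p.2) (p.1.drop p.2))
      = ∑ l ∈ csF n, ∑ m ∈ Finset.Icc 1 l.length, F (l.take m) (l.drop m) :=
    Finset.sum_sigma _ _ _
  rw [← h1, ← h2]
  refine Finset.sum_nbij' (fun p => (⟨(p.1.take p.2).sum, (p.1.take p.2, p.1.drop p.2)⟩ :
      (_ : ℕ) × (List ℕ × List ℕ)))
    (fun q => (⟨q.2.1 ++ q.2.2, q.2.1.length⟩ : (_ : List ℕ) × ℕ)) ?_ ?_ ?_ ?_ ?_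
  · rintro ⟨l, m⟩ hp
    simp only [Finset.mem_sigma, Finset.mem_Icc, mem_csF] at hp
    obtain ⟨⟨hpos, hsum⟩, hm1, hm2⟩ := hp
    have hsplit : (l.take m).sum + (l.drop m).sum = l.sum := by
      conv_rhs => rw [← List.take_append_drop m l]
      rw [List.sum_append]
    have htklen : (l.take m).length = m := by rw [List.length_take]; omega
    have htkne : l.take m ≠ [] := by
      intro h; rw [h] at htklen; simp at htklen; omega
    have htkpos : ∀ i ∈ l.take m, 0 < i := fun i hi => hpos i (List.take_subset _ _ hi)
    have htksum : 0 < (l.take m).sum := pos_sum_of_pos htkpos htkne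
    simp only [Finset.mem_sigma, Finset.mem_Icc, Finset.mem_product, mem_csF]
    refine ⟨⟨by omega, by omega⟩, ⟨htkpos, trivial⟩,
      fun i hi => hpos i (List.drop_subset _ _ hi), by omega⟩
  · rintro ⟨j, f, g⟩ hq
    simp only [Finset.mem_sigma, Finset.mem_Icc, Finset.mem_product, mem_csF] at hq
    obtain ⟨⟨hj1, hj2⟩, ⟨hfpos, hfsum⟩, hgpos, hgsum⟩ := hq
    have hfne : f ≠ [] := by
      rintro rfl; simp at hfsum; omega
    simp only [Finset.mem_sigma, Finset.mem_Icc, mem_csF]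
    refine ⟨⟨?_, ?_⟩, ?_, ?_⟩
    · intro i hi
      rcases List.mem_append.1 hi with hi | hi
      · exact hfpos i hi
      · exact hgpos i hi
    · rw [List.sum_append]; omega
    · have := List.length_pos_iff.2 hfne; omega
    · rw [List.length_append]; omega
  · rintro ⟨l, m⟩ hp
    simp only [Finset.mem_sigma, Finset.mem_Icc] at hp
    have htklen : (l.take m).length = m := by rw [List.length_take]; omega
    simp only [List.take_append_drop, htklen]
  · rintro ⟨j, f, g⟩ hq
    simp only [Finset.mem_sigma, Finset.mem_Icc, Finset.mem_product, mem_csF] at hq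
    simp only [List.take_left, List.drop_left, hq.2.1.2]
  · rintro ⟨l, m⟩ _
    rfl

lemma sum_reindex_tri {n : ℕ} (G : ℕ → ℕ → M) :
    ∑ m ∈ Finset.range n, ∑ j ∈ Finset.Icc 1 (m + 1), G j (m + 1)
      = ∑ j ∈ Finset.Icc 1 n, ∑ i ∈ Finset.range (n - j + 1), G j (j + i) := by
  have h1 : (∑ p ∈ (Finset.range n).sigma (fun m => Finset.Icc 1 (m + 1)), G p.2 (p.1 + 1))
      = ∑ m ∈ Finset.range n, ∑ j ∈ Finset.Icc 1 (m + 1), G j (m + 1) :=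
    Finset.sum_sigma _ _ _
  have h2 : (∑ p ∈ (Finset.Icc 1 n).sigma (fun j => Finset.range (n - j + 1)), G p.1 (p.1 + p.2))
      = ∑ j ∈ Finset.Icc 1 n, ∑ i ∈ Finset.range (n - j + 1), G j (j + i) :=
    Finset.sum_sigma _ _ _
  rw [← h1, ← h2]
  refine Finset.sum_nbij' (fun p => (⟨p.2, p.1 + 1 - p.2⟩ : (_ : ℕ) × ℕ))
    (fun q => (⟨q.1 + q.2 - 1, q.1⟩ : (_ : ℕ) × ℕ)) ?_ ?_ ?_ ?_ ?_
  · rintro ⟨m, j⟩ hp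
    simp only [Finset.mem_sigma, Finset.mem_Icc, Finset.mem_range] at hp ⊢
    omega
  · rintro ⟨j, i⟩ hq
    simp only [Finset.mem_sigma, Finset.mem_Icc, Finset.mem_range] at hq ⊢
    omega
  · rintro ⟨m, j⟩ hp
    simp only [Finset.mem_sigma, Finset.mem_Icc, Finset.mem_range] at hp
    have e1 : j + (m + 1 - j) - 1 = m := by omega
    simp only [e1]
  · rintro ⟨j, i⟩ hq
    simp only [Finset.mem_sigma, Finset.mem_Icc, Finset.mem_range] at hq
    have e1 : j + i - 1 + 1 - j = i := by omega
    simp only [e1]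
  · rintro ⟨m, j⟩ hp
    simp only [Finset.mem_sigma, Finset.mem_Icc, Finset.mem_range] at hp
    have e1 : j + (m + 1 - j) = m + 1 := by omega
    simp only [e1]

/-! #### Splitting lists along block lists -/

lemma take_splitAux {α : Type*} (l : List ℕ) (x : List α) (m : ℕ) :
    (x.splitWrtCompositionAux l).take m = x.splitWrtCompositionAux (l.take m) := by
  induction l generalizing x m with
  | nil => simp [List.splitWrtCompositionAux]
  | cons j t ih =>
    cases m with
    | zero => simp [List.splitWrtCompositionAux]
    | succ m =>
      rw [List.splitWrtCompositionAux_cons, List.take_succ_cons, List.take_succ_cons,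
        List.splitWrtCompositionAux_cons, ih]

lemma drop_splitAux {α : Type*} (l : List ℕ) (x : List α) (m : ℕ) :
    (x.splitWrtCompositionAux l).drop m
      = (x.drop (l.take m).sum).splitWrtCompositionAux (l.drop m) := by
  induction l generalizing x m with
  | nil => simp [List.splitWrtCompositionAux]
  | cons j t ih =>
    cases m with
    | zero => simp
    | succ m =>
      rw [List.splitWrtCompositionAux_cons, List.drop_succ_cons, ih, List.take_succ_cons,
        List.sum_cons, List.drop_succ_cons, List.drop_drop]

/-! #### Products of lists in a non-unital ring -/

lemma foldl_mul_assoc (v b : V) (w : List V) :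
    w.foldl (· * ·) (v * b) = v * w.foldl (· * ·) b := by
  induction w generalizing b with
  | nil => rfl
  | cons c w ih =>
    rw [List.foldl_cons, List.foldl_cons, mul_assoc]
    exact ih (b * c)

lemma prodList_cons_ne_nil (v : V) {w : List V} (hw : w ≠ []) :
    prodList V (v :: w) = v * prodList V w := by
  obtain ⟨b, t, rfl⟩ := List.exists_cons_of_ne_nil hw
  show (b :: t).foldl (· * ·) v = v * t.foldl (· * ·) b
  rw [List.foldl_cons]
  exact foldl_mul_assoc V v b t

lemma prodList_append {l₁ l₂ : List V} (h₁ : l₁ ≠ []) (h₂ : l₂ ≠ []) :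
    prodList V (l₁ ++ l₂) = prodList V l₁ * prodList V l₂ := by
  obtain ⟨a, t, rfl⟩ := List.exists_cons_of_ne_nil h₁
  obtain ⟨b, s, rfl⟩ := List.exists_cons_of_ne_nil h₂
  show (t ++ b :: s).foldl (· * ·) a = (t.foldl (· * ·) a) * (s.foldl (· * ·) b)
  rw [List.foldl_append, List.foldl_cons]
  exact foldl_mul_assoc V _ b s

lemma prodList_map_splitAux {x : List V} {f : List ℕ} (hf : f ≠ [])
    (hpos : ∀ i ∈ f, 0 < i) (hsum : f.sum ≤ x.length) :
    prodList V ((x.splitWrtCompositionAux f).map (prodList V)) = prodList V (x.take f.sum) := by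
  induction f generalizing x with
  | nil => exact absurd rfl hf
  | cons j t ih =>
    rcases eq_or_ne t [] with rfl | ht
    · rw [List.splitWrtCompositionAux_cons]
      show prodList V [prodList V (x.take j)] = _
      simp [prodList]
    · have hj : 0 < j := hpos j (by simp)
      have htpos : ∀ i ∈ t, 0 < i := fun i hi => hpos i (by simp [hi])
      have hsumc : j + t.sum ≤ x.length := by
        simpa only [List.sum_cons] using hsum
      have hsum' : t.sum ≤ (x.drop j).length := by
        rw [List.length_drop]; omega
      have htsum : 0 < t.sum := pos_sum_of_pos htpos ht
      have htake_ne : x.take j ≠ [] := by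
        have h1 : (x.take j).length = j := by rw [List.length_take]; omega
        intro h; rw [h] at h1; simp at h1; omega
      have hdrop_ne : (x.drop j).take t.sum ≠ [] := by
        have h1 : ((x.drop j).take t.sum).length = t.sum := by
          rw [List.length_take, List.length_drop]; omega
        intro h; rw [h] at h1; simp at h1; omega
      have haux_ne : ((x.drop j).splitWrtCompositionAux t).map (prodList V) ≠ [] := by
        have h1 : (((x.drop j).splitWrtCompositionAux t).map (prodList V)).length = t.length := by
          rw [List.length_map, List.length_splitWrtCompositionAux]
        intro h; rw [h] at h1; simp only [List.length_nil] at h1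
        exact ht (List.length_eq_zero_iff.1 h1.symm)
      rw [List.splitWrtCompositionAux_cons, List.map_cons,
        prodList_cons_ne_nil V _ haux_ne, ih ht htpos hsum',
        List.sum_cons, List.take_add, prodList_append V htake_ne hdrop_ne]

/-! #### The maps `φ_A` on basis vectors -/

lemma single_eq_smul_sg (w : List V) (r : k) :
    (Finsupp.single w r : TW k V) = r • sg w := by
  rw [sg, Finsupp.smul_single, smul_eq_mul, mul_one]

lemma ext1_sg (f : List V → TW k V) (w : List V) : ext1 k V f (sg w) = f w := by
  rw [sg, ext1, Finsupp.lsum_single, LinearMap.toSpanSingleton_apply_one]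

/-- The value of `φ_A` on (the basis vector of) a word. -/
def PaW (a : ℕ → k) (x : List V) : TW k V :=
  ∑ c : Composition x.length,
    ((c.blocks.map a).prod) • sg ((x.splitWrtComposition c).map (prodList V))

lemma phiA_sg (a : ℕ → k) (x : List V) : phiA k V a (sg x) = PaW k V a x := by
  rw [phiA, ext1_sg]
  rfl

lemma phiA_single (a : ℕ → k) (w : List V) (r : k) :
    phiA k V a (Finsupp.single w r) = r • PaW k V a w := by
  rw [single_eq_smul_sg, map_smul, phiA_sg]

/-- Prepending a letter, as a linear map. -/
def consL (v : V) : TW k V →ₗ[k] TW k V := Finsupp.lmapDomain k k (List.cons v)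

lemma consL_sg (v : V) (w : List V) : consL k V v (sg w) = sg (v :: w) := by
  simp [consL, sg, Finsupp.lmapDomain_apply, Finsupp.mapDomain_single]

lemma PaW_eq_sum (a : ℕ → k) (x : List V) :
    PaW k V a x = ∑ l ∈ csF x.length,
      ((l.map a).prod) • sg ((x.splitWrtCompositionAux l).map (prodList V)) := by
  rw [PaW]
  exact sum_comp_eq _ fun l =>
    ((l.map a).prod) • sg ((x.splitWrtCompositionAux l).map (prodList V))

lemma csF_zero : csF 0 = {([] : List ℕ)} := by
  ext l
  simp only [mem_csF, Finset.mem_singleton]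
  constructor
  · rintro ⟨h1, h2⟩
    cases l with
    | nil => rfl
    | cons a t =>
      have := h1 a (by simp)
      simp only [List.sum_cons] at h2
      omega
  · rintro rfl
    simp

lemma PaW_nil (a : ℕ → k) : PaW k V a [] = sg [] := by
  rw [PaW_eq_sum]
  show ∑ l ∈ csF 0, _ = _
  rw [csF_zero, Finset.sum_singleton]
  simp [List.splitWrtCompositionAux]

lemma PaW_cons (a : ℕ → k) {x : List V} (hx : x ≠ []) :
    PaW k V a x = ∑ j ∈ Finset.Icc 1 x.length,
      a j • consL k V (prodList V (x.take j)) (PaW k V a (x.drop j)) := by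
  have hn : 0 < x.length := List.length_pos_iff.2 hx
  rw [PaW_eq_sum, sum_csF_succ hn]
  refine Finset.sum_congr rfl fun j hj => ?_
  rw [Finset.mem_Icc] at hj
  have hlen : (x.drop j).length = x.length - j := List.length_drop
  rw [PaW_eq_sum, hlen, map_sum, Finset.smul_sum]
  refine Finset.sum_congr rfl fun r hr => ?_
  rw [List.splitWrtCompositionAux_cons, List.map_cons, List.map_cons, List.prod_cons,
    map_smul, consL_sg, smul_smul]

lemma phiA_PaW_expand (a b : ℕ → k) (x : List V) :
    phiA k V a (PaW k V b x) = ∑ l ∈ csF x.length,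
      ((l.map b).prod) • PaW k V a ((x.splitWrtCompositionAux l).map (prodList V)) := by
  rw [PaW_eq_sum, map_sum]
  exact Finset.sum_congr rfl fun l _ => by rw [map_smul, phiA_sg]

lemma compSeries_eq (a b : ℕ → k) {j : ℕ} (hj : j ≠ 0) :
    compSeries k a b j = ∑ f ∈ csF j, a f.length * (f.map b).prod := by
  rw [compSeries]
  rw [if_neg hj]
  exact sum_comp_eq j fun l => a l.length * (l.map b).prod

lemma phiA_PaW_cons (a b : ℕ → k) {x : List V} (hx : x ≠ []) :
    phiA k V a (PaW k V b x)
      = ∑ j ∈ Finset.Icc 1 x.length, compSeries k a b j •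
          consL k V (prodList V (x.take j)) (phiA k V a (PaW k V b (x.drop j))) := by
  have hn : 0 < x.length := List.length_pos_iff.2 hx
  have key : phiA k V a (PaW k V b x)
      = ∑ l ∈ csF x.length, ∑ m ∈ Finset.Icc 1 l.length,
          (((l.take m).map b).prod * ((l.drop m).map b).prod * a (l.take m).length) •
            consL k V (prodList V (x.take (l.take m).sum))
              (PaW k V a (((x.drop (l.take m).sum).splitWrtCompositionAux (l.drop m)).map
                (prodList V))) := by
    rw [phiA_PaW_expand]
    refine Finset.sum_congr rfl fun l hl => ?_
    rw [mem_csF] at hl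
    have hlne : l ≠ [] := by
      rintro rfl
      simp only [List.sum_nil] at hl
      omega
    have hylen : (((x.splitWrtCompositionAux l).map (prodList V))).length = l.length := by
      rw [List.length_map, List.length_splitWrtCompositionAux]
    have hyne : ((x.splitWrtCompositionAux l).map (prodList V)) ≠ [] := by
      intro h; rw [h] at hylen; simp only [List.length_nil] at hylen
      exact hlne (List.length_eq_zero_iff.1 hylen.symm)
    rw [PaW_cons k V a hyne, hylen, Finset.smul_sum]
    refine Finset.sum_congr rfl fun m hm => ?_
    rw [Finset.mem_Icc] at hm
    have htake : ((x.splitWrtCompositionAux l).map (prodList V)).take m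
        = ((x.splitWrtCompositionAux (l.take m)).map (prodList V)) := by
      rw [← List.map_take, take_splitAux]
    have hdrop : ((x.splitWrtCompositionAux l).map (prodList V)).drop m
        = (((x.drop (l.take m).sum).splitWrtCompositionAux (l.drop m)).map (prodList V)) := by
      rw [← List.map_drop, drop_splitAux]
    have htklen : (l.take m).length = m := by rw [List.length_take]; omega
    have htkne : l.take m ≠ [] := by
      intro h; rw [h] at htklen; simp at htklen; omega
    have hsumle : (l.take m).sum ≤ x.length := by
      have h1 : (l.take m).sum + (l.drop m).sum = l.sum := by
        conv_rhs => rw [← List.take_append_drop m l]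
        rw [List.sum_append]
      omega
    have hprod : prodList V (((x.splitWrtCompositionAux l).map (prodList V)).take m)
        = prodList V (x.take (l.take m).sum) := by
      rw [htake]
      exact prodList_map_splitAux V htkne
        (fun i hi => hl.1 i (List.take_subset _ _ hi)) hsumle
    rw [hprod, hdrop, smul_smul, htklen]
    congr 1
    all_goals conv_lhs => rw [← List.take_append_drop m l, List.map_append, List.prod_append]
    all_goals ring
  rw [key, sum_csF_split (F := fun f g =>
      ((f.map b).prod * (g.map b).prod * a f.length) •
        consL k V (prodList V (x.take f.sum))
          (PaW k V a (((x.drop f.sum).splitWrtCompositionAux g).map (prodList V))))]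
  refine Finset.sum_congr rfl fun j hj => ?_
  rw [Finset.mem_Icc] at hj
  have hjlen : (x.drop j).length = x.length - j := List.length_drop
  rw [phiA_PaW_expand, hjlen, compSeries_eq k a b (by omega), map_sum, Finset.sum_smul]
  refine Finset.sum_congr rfl fun f hf => ?_
  rw [mem_csF] at hf
  rw [hf.2, Finset.smul_sum]
  refine Finset.sum_congr rfl fun g hg => ?_
  rw [map_smul, smul_smul]
  congr 1
  ring

lemma phiA_phiA_sg (a b : ℕ → k) :
    ∀ (n : ℕ) (x : List V), x.length ≤ n →
      phiA k V a (phiA k V b (sg x)) = phiA k V (compSeries k a b) (sg x) := by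
  intro n
  induction n with
  | zero =>
    intro x hx
    have hx0 : x = [] := List.length_eq_zero_iff.1 (Nat.le_zero.1 hx)
    subst hx0
    rw [phiA_sg, PaW_nil, phiA_sg, PaW_nil, phiA_sg, PaW_nil]
  | succ n ih =>
    intro x hx
    rcases eq_or_ne x [] with rfl | hne
    · rw [phiA_sg, PaW_nil, phiA_sg, PaW_nil, phiA_sg, PaW_nil]
    · rw [phiA_sg, phiA_sg, phiA_PaW_cons k V a b hne, PaW_cons k V _ hne]
      refine Finset.sum_congr rfl fun j hj => ?_
      rw [Finset.mem_Icc] at hj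
      have hlen : (x.drop j).length ≤ n := by
        rw [List.length_drop]; omega
      rw [← phiA_sg k V b, ih _ hlen, phiA_sg]

lemma PaW_delta :
    ∀ (n : ℕ) (x : List V), x.length ≤ n →
      PaW k V (fun m => if m = 1 then (1 : k) else 0) x = sg x := by
  intro n
  induction n with
  | zero =>
    intro x hx
    have hx0 : x = [] := List.length_eq_zero_iff.1 (Nat.le_zero.1 hx)
    subst hx0
    exact PaW_nil k V _
  | succ n ih =>
    intro x hx
    rcases eq_or_ne x [] with rfl | hne
    · exact PaW_nil k V _
    · obtain ⟨v, t, rfl⟩ := List.exists_cons_of_ne_nil hne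
      rw [PaW_cons k V _ hne]
      rw [Finset.sum_eq_single 1]
      · have h1 : (v :: t).take 1 = [v] := rfl
        have h2 : (v :: t).drop 1 = t := rfl
        rw [h1, h2, if_pos rfl, one_smul]
        have h3 : prodList V [v] = v := rfl
        rw [h3, ih t (by simpa using hx), consL_sg]
      · intro j _ hj1
        rw [if_neg hj1, zero_smul]
      · intro h
        exfalso
        refine h (Finset.mem_Icc.2 ⟨le_refl 1, ?_⟩)
        simp
  
lemma delL_sg (w : List V) : delL k V (sg w) = delW k V w := by
  rw [sg, delL, Finsupp.lsum_single, LinearMap.toSpanSingleton_apply_one]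

lemma delW_cons (v : V) (w : List V) :
    delW k V (v :: w) = sg [] ⊗ₜ[k] sg (v :: w)
      + (TensorProduct.map (consL k V v) LinearMap.id) (delW k V w) := by
  rw [delW, delW, map_sum]
  have hlen : (v :: w).length + 1 = w.length + 1 + 1 := rfl
  rw [hlen, Finset.sum_range_succ', add_comm]
  congr 1
  · refine Finset.sum_congr rfl fun i _ => ?_
    rw [List.take_succ_cons, List.drop_succ_cons, TensorProduct.map_tmul, consL_sg,
      LinearMap.id_apply]
  all_goals simp

lemma delL_consL (v : V) (u : TW k V) :
    delL k V (consL k V v u) = sg [] ⊗ₜ[k] (consL k V v u)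
      + (TensorProduct.map (consL k V v) LinearMap.id) (delL k V u) := by
  induction u using Finsupp.induction_linear with
  | zero => simp
  | add f g hf hg =>
    simp only [map_add, TensorProduct.tmul_add, hf, hg]
    exact add_add_add_comm _ _ _ _
  | single w r =>
    rw [single_eq_smul_sg]
    simp only [map_smul, TensorProduct.tmul_smul]
    rw [← smul_add]
    congr 1
    rw [consL_sg, delL_sg, delL_sg, delW_cons]

lemma delL_PaW (a : ℕ → k) :
    ∀ (n : ℕ) (x : List V), x.length ≤ n →
      delL k V (PaW k V a x)
        = (TensorProduct.map (phiA k V a) (phiA k V a)) (delW k V x) := by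
  intro n
  induction n with
  | zero =>
    intro x hx
    have hx0 : x = [] := List.length_eq_zero_iff.1 (Nat.le_zero.1 hx)
    subst hx0
    rw [PaW_nil, delL_sg]
    simp only [delW, List.length_nil, zero_add, Finset.sum_range_one, List.take_nil,
      List.drop_nil, TensorProduct.map_tmul, phiA_sg, PaW_nil]
  | succ n ih =>
    intro x hx
    rcases eq_or_ne x [] with rfl | hne
    · rw [PaW_nil, delL_sg]
      simp only [delW, List.length_nil, zero_add, Finset.sum_range_one, List.take_nil,
        List.drop_nil, TensorProduct.map_tmul, phiA_sg, PaW_nil]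
    · have hN : 1 ≤ x.length := List.length_pos_iff.2 hne
      have hdl : ∀ j ∈ Finset.Icc 1 x.length,
          delL k V (PaW k V a (x.drop j))
            = ∑ i ∈ Finset.range (x.length - j + 1),
                PaW k V a ((x.drop j).take i) ⊗ₜ[k] PaW k V a ((x.drop j).drop i) := by
        intro j hj
        rw [Finset.mem_Icc] at hj
        have hlen : (x.drop j).length = x.length - j := List.length_drop
        have hle : (x.drop j).length ≤ n := by rw [hlen]; omega
        rw [ih _ hle, delW, hlen, map_sum]
        exact Finset.sum_congr rfl fun i _ => by
          rw [TensorProduct.map_tmul, phiA_sg, phiA_sg]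
      have hRHS : (TensorProduct.map (phiA k V a) (phiA k V a)) (delW k V x)
          = sg [] ⊗ₜ[k] PaW k V a x
            + ∑ j ∈ Finset.Icc 1 x.length, ∑ i ∈ Finset.range (x.length - j + 1),
                (a j • consL k V (prodList V (x.take j)) (PaW k V a ((x.drop j).take i)))
                  ⊗ₜ[k] PaW k V a ((x.drop j).drop i) := by
        rw [delW, map_sum, Finset.sum_range_succ', add_comm]
        have hz : (TensorProduct.map (phiA k V a) (phiA k V a))
            (sg (x.take 0) ⊗ₜ[k] sg (x.drop 0)) = sg [] ⊗ₜ[k] PaW k V a x := by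
          rw [List.take_zero, List.drop_zero, TensorProduct.map_tmul, phiA_sg, phiA_sg, PaW_nil]
        rw [hz]
        congr 1
        calc
            ∑ m ∈ Finset.range x.length,
                (TensorProduct.map (phiA k V a) (phiA k V a))
                  (sg (x.take (m + 1)) ⊗ₜ[k] sg (x.drop (m + 1)))
              = ∑ m ∈ Finset.range x.length, ∑ j ∈ Finset.Icc 1 (m + 1),
                  (a j • consL k V (prodList V (x.take j))
                      (PaW k V a ((x.drop j).take (m + 1 - j))))
                    ⊗ₜ[k] PaW k V a (x.drop (m + 1)) := by
                refine Finset.sum_congr rfl fun m hm => ?_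
                rw [Finset.mem_range] at hm
                rw [TensorProduct.map_tmul, phiA_sg, phiA_sg]
                have htklen : (x.take (m + 1)).length = m + 1 := by
                  rw [List.length_take]; omega
                have htk : x.take (m + 1) ≠ [] := by
                  intro h; rw [h] at htklen; simp at htklen
                rw [PaW_cons k V a htk, TensorProduct.sum_tmul, htklen]
                refine Finset.sum_congr rfl fun j hj => ?_
                rw [Finset.mem_Icc] at hj
                rw [List.take_take, Nat.min_eq_left hj.2, List.drop_take]
            _ = ∑ j ∈ Finset.Icc 1 x.length, ∑ i ∈ Finset.range (x.length - j + 1),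
                  (a j • consL k V (prodList V (x.take j))
                      (PaW k V a ((x.drop j).take (j + i - j))))
                    ⊗ₜ[k] PaW k V a (x.drop (j + i)) :=
                sum_reindex_tri fun j q =>
                  (a j • consL k V (prodList V (x.take j))
                      (PaW k V a ((x.drop j).take (q - j))))
                    ⊗ₜ[k] PaW k V a (x.drop q)
            _ = ∑ j ∈ Finset.Icc 1 x.length, ∑ i ∈ Finset.range (x.length - j + 1),
                  (a j • consL k V (prodList V (x.take j)) (PaW k V a ((x.drop j).take i)))
                    ⊗ₜ[k] PaW k V a ((x.drop j).drop i) := by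
                refine Finset.sum_congr rfl fun j _ => Finset.sum_congr rfl fun i _ => ?_
                rw [Nat.add_sub_cancel_left, List.drop_drop]
      have expand : ∀ j ∈ Finset.Icc 1 x.length,
          delL k V (a j • consL k V (prodList V (x.take j)) (PaW k V a (x.drop j)))
            = sg [] ⊗ₜ[k] (a j • consL k V (prodList V (x.take j)) (PaW k V a (x.drop j)))
              + ∑ i ∈ Finset.range (x.length - j + 1),
                  (a j • consL k V (prodList V (x.take j)) (PaW k V a ((x.drop j).take i)))
                    ⊗ₜ[k] PaW k V a ((x.drop j).drop i) := by
        intro j hj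
        rw [map_smul, delL_consL, hdl j hj, map_sum, smul_add, Finset.smul_sum,
          TensorProduct.tmul_smul]
        congr 1
        all_goals
          refine Finset.sum_congr rfl fun i _ => ?_
          rw [TensorProduct.map_tmul, LinearMap.id_apply, TensorProduct.smul_tmul']
      rw [PaW_cons k V a hne, map_sum, Finset.sum_congr rfl expand, Finset.sum_add_distrib,
        hRHS]
      congr 1
      rw [← TensorProduct.tmul_sum, ← PaW_cons k V a hne]

end Aux

/-- The maps `φ_A` are coalgebra endomorphisms of `(T(V), deconcatenation)` and satisfy
`φ_X = Id` and `φ_A ∘ φ_B = φ_{A∘B}` for formal series `A, B` without constant term. -/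
theorem phiA_comp :
    (∀ a : ℕ → k, a 0 = 0 →
      delL k V ∘ₗ phiA k V a = TensorProduct.map (phiA k V a) (phiA k V a) ∘ₗ delL k V) ∧
    (phiA k V (fun n => if n = 1 then 1 else 0) = LinearMap.id) ∧
    (∀ a b : ℕ → k, a 0 = 0 → b 0 = 0 →
      phiA k V a ∘ₗ phiA k V b = phiA k V (compSeries k a b)) := by
  refine ⟨?_, ?_, ?_⟩
  · intro a _
    apply Finsupp.lhom_ext
    intro w r
    rw [LinearMap.comp_apply, LinearMap.comp_apply, single_eq_smul_sg, map_smul, map_smul,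
      map_smul, map_smul]
    congr 1
    rw [phiA_sg, delL_sg]
    exact delL_PaW k V a w.length w le_rfl
  · apply Finsupp.lhom_ext
    intro w r
    rw [phiA_single, PaW_delta k V w.length w le_rfl, LinearMap.id_apply, single_eq_smul_sg]
  · intro a b _ _
    apply Finsupp.lhom_ext
    intro w r
    rw [LinearMap.comp_apply, single_eq_smul_sg, map_smul, map_smul, map_smul]
    congr 1
    exact phiA_phiA_sg k V a b w.length w le_rfl
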